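/- arXiv:1504.02918 — 3 statements merged into one kernel-verified Lean document; each statement's English description precedes it below -/
import Mathlib

section
/- Let T > 0, c > 0 and let α be a real number with 2 ≤ α ≤ 4. Let y : [0,T] → ℝ be differentiable with y(t) ≥ 0 for all t ∈ [0,T], and suppose y'(t) ≤ c · (y(t)+1)² · y(t)^{α/2} for all t ∈ [0,T]. If ∫₀^{T} y(s)^{α/2} ds < (1 − cos(1/(y(0)+1)))/(2c), then for every t ∈ [0,T], y(t) ≤ 1/arccos((1 + cos(1/(y(0)+1)))/2) − 1. -/
/-!
Put `u = 1 / (y + 1) ∈ (0, 1]`. Since `0 ≤ sin u ≤ 1`, the derivative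
`(cos u)' = sin u · y' / (y + 1)²` is at most `c · y^{α/2}`, so
`cos u(t) ≤ cos u(0) + c ∫₀ᵀ y^{α/2}`, and the smallness of the integral keeps `cos u(t)` below the
midpoint `K` of `cos u(0)` and `1`. As cosine is decreasing on `[0, π]`, `u(t) ≥ arccos K > 0`.
-/

open intervalIntegral MeasureTheory Real Set

lemma inv_add_one_mem_Ioc {a : ℝ} (ha : 0 ≤ a) : (a + 1)⁻¹ ∈ Ioc (0 : ℝ) 1 :=
  ⟨by positivity, inv_le_one_of_one_le₀ (by linarith)⟩

lemma inv_add_one_le_pi {a : ℝ} (ha : 0 ≤ a) : (a + 1)⁻¹ ≤ π :=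
  (inv_add_one_mem_Ioc ha).2.trans (by linarith [pi_gt_three])

lemma cos_inv_add_one_lt_one {a : ℝ} (ha : 0 ≤ a) : cos (a + 1)⁻¹ < 1 := by
  simpa using cos_lt_cos_of_nonneg_of_le_pi le_rfl (inv_add_one_le_pi ha)
    (inv_add_one_mem_Ioc ha).1

lemma hasDerivAt_cos_inv_add_one {y : ℝ → ℝ} {y' x : ℝ} (hy : HasDerivAt y y' x)
    (hx : y x + 1 ≠ 0) :
    HasDerivAt (fun t => cos (y t + 1)⁻¹) (sin (y x + 1)⁻¹ * (y' / (y x + 1) ^ 2)) x := by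
  refine ((hy.add_const 1).inv hx).cos.congr_deriv ?_
  simp only [Pi.inv_apply]
  ring

lemma sin_inv_add_one_mul_div_le {a d B : ℝ} (ha : 0 ≤ a) (hB : 0 ≤ B)
    (hd : d ≤ (a + 1) ^ 2 * B) : sin (a + 1)⁻¹ * (d / (a + 1) ^ 2) ≤ B := by
  have hsin_nonneg : 0 ≤ sin (a + 1)⁻¹ :=
    sin_nonneg_of_nonneg_of_le_pi (inv_add_one_mem_Ioc ha).1.le (inv_add_one_le_pi ha)
  have hq : d / (a + 1) ^ 2 ≤ B := by
    rw [div_le_iff₀ (by positivity)]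
    linarith
  rcases le_total (d / (a + 1) ^ 2) 0 with hq_nonpos | hq_nonneg
  · exact (mul_nonpos_of_nonneg_of_nonpos hsin_nonneg hq_nonpos).trans hB
  · exact (mul_le_of_le_one_left hq_nonneg (sin_le_one _)).trans hq

theorem cos_inv_add_one_sub_le_integral {y y' w : ℝ → ℝ} {a b c : ℝ} (hab : a ≤ b)
    (hc : 0 ≤ c) (hy : ∀ t ∈ Icc a b, HasDerivAt y (y' t) t) (hynn : ∀ t ∈ Icc a b, 0 ≤ y t)
    (hw : ∀ t ∈ Icc a b, 0 ≤ w t) (hwi : IntegrableOn w (Icc a b))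
    (hineq : ∀ t ∈ Icc a b, y' t ≤ c * (y t + 1) ^ 2 * w t) :
    cos (y b + 1)⁻¹ - cos (y a + 1)⁻¹ ≤ c * ∫ s in a..b, w s := by
  have hy1 : ∀ t ∈ Icc a b, y t + 1 ≠ 0 := fun t ht => by linarith [hynn t ht]
  rw [← intervalIntegral.integral_const_mul]
  refine sub_le_integral_of_hasDeriv_right_of_le hab ?_
    (fun x hx => (hasDerivAt_cos_inv_add_one (hy x (Ioo_subset_Icc_self hx))
      (hy1 x (Ioo_subset_Icc_self hx))).hasDerivWithinAt) (hwi.const_mul c) ?_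
  · exact fun t ht =>
      (hasDerivAt_cos_inv_add_one (hy t ht) (hy1 t ht)).continuousAt.continuousWithinAt
  · intro x hx
    have hx := Ioo_subset_Icc_self hx
    exact sin_inv_add_one_mul_div_le (hynn x hx) (mul_nonneg hc (hw x hx))
      (by linarith [hineq x hx])

theorem cos_inv_add_one_le_add_integral {y y' w : ℝ → ℝ} {a b c : ℝ} (hc : 0 ≤ c)
    (hy : ∀ t ∈ Icc a b, HasDerivAt y (y' t) t) (hynn : ∀ t ∈ Icc a b, 0 ≤ y t)
    (hw : ∀ t ∈ Icc a b, 0 ≤ w t) (hwi : IntegrableOn w (Icc a b))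
    (hineq : ∀ t ∈ Icc a b, y' t ≤ c * (y t + 1) ^ 2 * w t) :
    ∀ t ∈ Icc a b, cos (y t + 1)⁻¹ ≤ cos (y a + 1)⁻¹ + c * ∫ s in a..b, w s := by
  intro t ht
  have hsub : Icc a t ⊆ Icc a b := Icc_subset_Icc_right ht.2
  have hrise := cos_inv_add_one_sub_le_integral ht.1 hc (fun s hs => hy s (hsub hs))
    (fun s hs => hynn s (hsub hs)) (fun s hs => hw s (hsub hs)) (hwi.mono_set hsub)
    (fun s hs => hineq s (hsub hs))
  have hmono : (∫ s in a..t, w s) ≤ ∫ s in a..b, w s :=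
    integral_mono_interval le_rfl ht.1 ht.2
      (ae_restrict_of_forall_mem measurableSet_Ioc fun s hs => hw s (Ioc_subset_Icc_self hs))
      ((intervalIntegrable_iff_integrableOn_Icc_of_le (ht.1.trans ht.2)).2 hwi)
  linarith [mul_le_mul_of_nonneg_left hmono hc]

lemma le_one_div_arccos_sub_one {a K : ℝ} (ha : 0 ≤ a) (hK : cos (a + 1)⁻¹ ≤ K) (hK1 : K < 1) :
    a ≤ 1 / arccos K - 1 := by
  have harccos_pos : 0 < arccos K := arccos_pos.2 hK1
  have harccos_le : arccos K ≤ (a + 1)⁻¹ := by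
    simpa [arccos_cos (inv_add_one_mem_Ioc ha).1.le (inv_add_one_le_pi ha)]
      using arccos_le_arccos hK
  have : a + 1 ≤ (arccos K)⁻¹ := by
    rw [le_inv_comm₀ (by linarith) harccos_pos]
    exact harccos_le
  rw [one_div]
  linarith

theorem bounded_from_small_integral_general (T c α : ℝ) (hc : 0 < c)
    (hα1 : 2 ≤ α) (y y' : ℝ → ℝ)
    (hy : ∀ t ∈ Set.Icc 0 T, HasDerivAt y (y' t) t)
    (hynn : ∀ t ∈ Set.Icc 0 T, 0 ≤ y t)
    (hineq : ∀ t ∈ Set.Icc 0 T, y' t ≤ c * (y t + 1) ^ 2 * y t ^ (α / 2))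
    (hsmall : (∫ s in (0:ℝ)..T, y s ^ (α / 2)) <
      (1 - Real.cos (1 / (y 0 + 1))) / (2 * c)) :
    ∀ t ∈ Set.Icc 0 T,
      y t ≤ 1 / Real.arccos ((1 + Real.cos (1 / (y 0 + 1))) / 2) - 1 := by
  intro t ht
  have hT : 0 ≤ T := ht.1.trans ht.2
  have hwi : IntegrableOn (fun s => y s ^ (α / 2)) (Icc 0 T) :=
    (ContinuousOn.rpow_const (fun s hs => (hy s hs).continuousAt.continuousWithinAt)
      fun _ _ => Or.inr (by linarith)).integrableOn_compact isCompact_Icc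
  have hcos := cos_inv_add_one_le_add_integral hc.le hy hynn
    (fun s hs => rpow_nonneg (hynn s hs) _) hwi hineq t ht
  rw [one_div (y 0 + 1)] at hsmall ⊢
  have hsmall' := (lt_div_iff₀ (by positivity)).1 hsmall
  have hcos0 := cos_inv_add_one_lt_one (hynn 0 ⟨le_rfl, hT⟩)
  exact le_one_div_arccos_sub_one (hynn t ht) (by linarith) (by linarith)

/-- If `y' ≤ c (y+1)² y^{α/2}` and `∫₀ᵀ y^{α/2} < (1 - cos(1/(y(0)+1)))/(2c)`,
then `y` is uniformly bounded on `[0,T]`. -/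
theorem bounded_from_small_integral (T c α : ℝ) (hT : 0 < T) (hc : 0 < c)
    (hα1 : 2 ≤ α) (hα2 : α ≤ 4) (y y' : ℝ → ℝ)
    (hy : ∀ t ∈ Set.Icc 0 T, HasDerivAt y (y' t) t)
    (hynn : ∀ t ∈ Set.Icc 0 T, 0 ≤ y t)
    (hineq : ∀ t ∈ Set.Icc 0 T, y' t ≤ c * (y t + 1) ^ 2 * y t ^ (α / 2))
    (hsmall : (∫ s in (0:ℝ)..T, y s ^ (α / 2)) <
      (1 - Real.cos (1 / (y 0 + 1))) / (2 * c)) :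
    ∀ t ∈ Set.Icc 0 T,
      y t ≤ 1 / Real.arccos ((1 + Real.cos (1 / (y 0 + 1))) / 2) - 1 :=
  bounded_from_small_integral_general T c α hc hα1 y y' hy hynn hineq hsmall
end

section
/- Let T > 0, c ≥ 0 and let α be a real number with 2 ≤ α ≤ 4. Let y : [0,T] → ℝ be differentiable with y(t) ≥ 0 for all t ∈ [0,T], and let g : [0,T] → ℝ be Lebesgue integrable with g(t) ≥ 0 for all t ∈ [0,T]. Suppose y'(t) ≤ (y(t)+1)² · ( g(t) + c · y(t)^{α/2} ) for all t ∈ [0,T]. Then for every t ∈ [0,T], cos(1/(y(t)+1)) ≤ cos(1/(y(0)+1)) + ∫₀^{T} g(s) ds + c · ∫₀^{T} y(s)^{α/2} ds. -/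
/-!
Since `0 < 1/(y+1) ≤ 1`, the factor `sin (1/(y+1))` lies in `[0, 1]`, so the derivative
`sin (1/(y+1)) · y'/(y+1)²` of `cos (1/(y+1))` is at most the nonnegative forcing term
`g + c y^{α/2}`. Integrating from `0` to `t` and enlarging the interval to `[0, T]` gives the bound.
-/

open intervalIntegral MeasureTheory Set Real

theorem le_add_integral_of_hasDerivAt_le {h h' f : ℝ → ℝ} {a b t : ℝ} (ht : t ∈ Icc a b)
    (hderiv : ∀ s ∈ Icc a b, HasDerivAt h (h' s) s) (hle : ∀ s ∈ Icc a b, h' s ≤ f s)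
    (hf : IntegrableOn f (Icc a b)) (hf0 : ∀ s ∈ Icc a b, 0 ≤ f s) :
    h t ≤ h a + ∫ s in a..b, f s := by
  obtain ⟨hat, htb⟩ := ht
  have hsub : Icc a t ⊆ Icc a b := Icc_subset_Icc le_rfl htb
  have hinc : h t - h a ≤ ∫ s in a..t, f s :=
    sub_le_integral_of_hasDeriv_right_of_le hat
      (fun s hs => (hderiv s (hsub hs)).continuousAt.continuousWithinAt)
      (fun s hs => (hderiv s (hsub (Ioo_subset_Icc_self hs))).hasDerivWithinAt)
      (hf.mono_set hsub) (fun s hs => hle s (hsub (Ioo_subset_Icc_self hs)))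
  have hmono : ∫ s in a..t, f s ≤ ∫ s in a..b, f s := by
    refine integral_mono_interval le_rfl hat htb ?_
      ((intervalIntegrable_iff_integrableOn_Icc_of_le (hat.trans htb)).2 hf)
    filter_upwards [ae_restrict_mem measurableSet_Ioc] with s hs
    exact hf0 s (Ioc_subset_Icc_self hs)
  linarith

theorem hasDerivAt_cos_one_div_add_one {y : ℝ → ℝ} {y' t : ℝ} (hy : HasDerivAt y y' t)
    (hy1 : y t + 1 ≠ 0) :
    HasDerivAt (fun s => cos (1 / (y s + 1))) (sin (1 / (y t + 1)) * (y' / (y t + 1) ^ 2)) t := by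
  have hinv : HasDerivAt (fun s => (y s + 1)⁻¹) (-y' / (y t + 1) ^ 2) t :=
    (hy.add_const 1).inv hy1
  simp only [one_div]
  exact ((hasDerivAt_cos _).comp t hinv).congr_deriv (by ring)

theorem sin_one_div_add_one_mul_div_le {x d f : ℝ} (hx : 0 ≤ x) (hf : 0 ≤ f)
    (hd : d ≤ (x + 1) ^ 2 * f) :
    sin (1 / (x + 1)) * (d / (x + 1) ^ 2) ≤ f := by
  have hx1 : 0 < x + 1 := by linarith
  have hu0 : 0 < 1 / (x + 1) := one_div_pos.2 hx1
  have hu1 : 1 / (x + 1) ≤ 1 := (div_le_one hx1).2 (by linarith)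
  have hsin0 : 0 ≤ sin (1 / (x + 1)) :=
    sin_nonneg_of_nonneg_of_le_pi hu0.le (hu1.trans (by linarith [pi_gt_three]))
  have hq : d / (x + 1) ^ 2 ≤ f := by
    rw [div_le_iff₀ (by positivity), mul_comm]
    exact hd
  calc sin (1 / (x + 1)) * (d / (x + 1) ^ 2) ≤ sin (1 / (x + 1)) * f :=
        mul_le_mul_of_nonneg_left hq hsin0
    _ ≤ f := mul_le_of_le_one_left hf (sin_le_one _)

theorem cos_bound_from_diff_ineq_forced_general (T c α : ℝ) (hc : 0 ≤ c)
    (hα1 : 2 ≤ α) (y y' g : ℝ → ℝ)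
    (hy : ∀ t ∈ Set.Icc 0 T, HasDerivAt y (y' t) t)
    (hynn : ∀ t ∈ Set.Icc 0 T, 0 ≤ y t)
    (hgint : IntegrableOn g (Set.Icc 0 T))
    (hg : ∀ t ∈ Set.Icc 0 T, 0 ≤ g t)
    (hineq : ∀ t ∈ Set.Icc 0 T, y' t ≤ (y t + 1) ^ 2 * (g t + c * y t ^ (α / 2))) :
    ∀ t ∈ Set.Icc 0 T,
      Real.cos (1 / (y t + 1)) ≤
        Real.cos (1 / (y 0 + 1)) + (∫ s in (0:ℝ)..T, g s) +
          c * ∫ s in (0:ℝ)..T, y s ^ (α / 2) := by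
  intro t ht
  have hT : 0 ≤ T := ht.1.trans ht.2
  have hycont : ContinuousOn y (Icc 0 T) := fun s hs => (hy s hs).continuousAt.continuousWithinAt
  have hpow : IntegrableOn (fun s => y s ^ (α / 2)) (Icc 0 T) :=
    (hycont.rpow_const fun _ _ => Or.inr (by linarith)).integrableOn_Icc
  have hf0 : ∀ s ∈ Icc 0 T, 0 ≤ g s + c * y s ^ (α / 2) := fun s hs =>
    add_nonneg (hg s hs) (mul_nonneg hc (rpow_nonneg (hynn s hs) _))
  calc cos (1 / (y t + 1))
      ≤ cos (1 / (y 0 + 1)) + ∫ s in (0:ℝ)..T, (g s + c * y s ^ (α / 2)) :=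
        le_add_integral_of_hasDerivAt_le ht
          (fun s hs => hasDerivAt_cos_one_div_add_one (hy s hs) (by linarith [hynn s hs]))
          (fun s hs => sin_one_div_add_one_mul_div_le (hynn s hs) (hf0 s hs) (hineq s hs))
          (hgint.add (hpow.const_mul c)) hf0
    _ = cos (1 / (y 0 + 1)) + (∫ s in (0:ℝ)..T, g s) + c * ∫ s in (0:ℝ)..T, y s ^ (α / 2) := by
        rw [integral_add ((intervalIntegrable_iff_integrableOn_Icc_of_le hT).2 hgint)
          ((intervalIntegrable_iff_integrableOn_Icc_of_le hT).2 (hpow.const_mul c)),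
          intervalIntegral.integral_const_mul]
        ring

/-- The forced cosine bound: if `y' ≤ (y+1)² (g + c y^{α/2})` with `g ≥ 0` integrable,
then `cos(1/(y(t)+1)) ≤ cos(1/(y(0)+1)) + ∫₀ᵀ g + c ∫₀ᵀ y^{α/2}`. -/
theorem cos_bound_from_diff_ineq_forced (T c α : ℝ) (hT : 0 < T) (hc : 0 ≤ c)
    (hα1 : 2 ≤ α) (hα2 : α ≤ 4) (y y' g : ℝ → ℝ)
    (hy : ∀ t ∈ Set.Icc 0 T, HasDerivAt y (y' t) t)
    (hynn : ∀ t ∈ Set.Icc 0 T, 0 ≤ y t)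
    (hgint : IntegrableOn g (Set.Icc 0 T))
    (hg : ∀ t ∈ Set.Icc 0 T, 0 ≤ g t)
    (hineq : ∀ t ∈ Set.Icc 0 T, y' t ≤ (y t + 1) ^ 2 * (g t + c * y t ^ (α / 2))) :
    ∀ t ∈ Set.Icc 0 T,
      Real.cos (1 / (y t + 1)) ≤
        Real.cos (1 / (y 0 + 1)) + (∫ s in (0:ℝ)..T, g s) +
          c * ∫ s in (0:ℝ)..T, y s ^ (α / 2) :=
  cos_bound_from_diff_ineq_forced_general T c α hc hα1 y y' g hy hynn hgint hg hineq
end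

section
/- Let T > 0, c ≥ 0 and let α be a real number with 2 ≤ α ≤ 4. Let y : [0,T] → ℝ be differentiable with y(t) ≥ 0 for all t ∈ [0,T], and let g : [0,T] → ℝ be Lebesgue integrable with g(t) ≥ 0 for all t ∈ [0,T]. Suppose y'(t) ≤ (y(t)+1)² · ( g(t) + c · y(t)^{α/2} ) for all t ∈ [0,T], and set K = cos(1/(y(0)+1)) + ∫₀^{T} g(s) ds + c · ∫₀^{T} y(s)^{α/2} ds. If K < 1, then for every t ∈ [0,T], y(t) ≤ 1/arccos(K) − 1; in particular y is bounded on [0,T]. -/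
open intervalIntegral MeasureTheory Set

/-! With `F = cos (1 / (y + 1))`, the chain rule gives `F' = sin (1 / (y + 1)) · y' / (y + 1)²`.
Since `1 / (y + 1) ∈ (0, 1] ⊆ [0, π]`, the sine factor lies in `[0, 1]`, so the differential
inequality yields `F' ≤ g + c y^{α/2}`. Integrating, `F t ≤ K`, and as `arccos` inverts `cos` on
`[0, π]` this means `1 / (y t + 1) ≥ arccos K`, which is positive because `K < 1`. -/

theorem HasDerivAt.cos_inv {f : ℝ → ℝ} {f' x : ℝ} (hf : HasDerivAt f f' x) (hx : f x ≠ 0) :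
    HasDerivAt (fun s => Real.cos (f s)⁻¹) (Real.sin (f x)⁻¹ * (f' / f x ^ 2)) x :=
  (hf.inv hx).cos.congr_deriv (by rw [Pi.inv_apply]; ring)

theorem Real.sin_inv_mul_div_sq_le {u d h : ℝ} (hu : 1 ≤ u) (hd : d ≤ u ^ 2 * h) (hh : 0 ≤ h) :
    Real.sin u⁻¹ * (d / u ^ 2) ≤ h := by
  have hu_inv : 0 < u⁻¹ := inv_pos.2 (by linarith)
  have hsin_nonneg : 0 ≤ Real.sin u⁻¹ :=
    Real.sin_nonneg_of_nonneg_of_le_pi hu_inv.le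
      ((inv_le_one_of_one_le₀ hu).trans (by linarith [Real.pi_gt_three]))
  have hdiv : d / u ^ 2 ≤ h := by
    rw [div_le_iff₀ (by positivity)]
    linarith
  nlinarith [Real.sin_le_one u⁻¹]

theorem Real.arccos_le_of_cos_le {x u : ℝ} (hu₀ : 0 ≤ u) (huπ : u ≤ Real.pi) (h : Real.cos u ≤ x) :
    Real.arccos x ≤ u :=
  (Real.arccos_le_arccos h).trans_eq (Real.arccos_cos hu₀ huπ)

theorem sub_le_integral_of_hasDerivAt_of_le_of_nonneg {F F' h : ℝ → ℝ} {a b t : ℝ}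
    (ht : t ∈ Icc a b) (hF : ∀ s ∈ Icc a b, HasDerivAt F (F' s) s)
    (hF'h : ∀ s ∈ Icc a b, F' s ≤ h s) (hint : IntegrableOn h (Icc a b))
    (hnn : ∀ s ∈ Icc a b, 0 ≤ h s) :
    F t - F a ≤ ∫ s in a..b, h s := by
  have hsub : Icc a t ⊆ Icc a b := Icc_subset_Icc_right ht.2
  calc F t - F a ≤ ∫ s in a..t, h s :=
        sub_le_integral_of_hasDeriv_right_of_le ht.1
          (fun s hs => (hF s (hsub hs)).continuousAt.continuousWithinAt)
          (fun s hs => (hF s (hsub (Ioo_subset_Icc_self hs))).hasDerivWithinAt)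
          (hint.mono_set hsub) (fun s hs => hF'h s (hsub (Ioo_subset_Icc_self hs)))
    _ ≤ ∫ s in a..b, h s :=
        integral_mono_interval le_rfl ht.1 ht.2
          ((ae_restrict_mem measurableSet_Ioc).mono fun s hs => hnn s (Ioc_subset_Icc_self hs))
          ((intervalIntegrable_iff_integrableOn_Icc_of_le (ht.1.trans ht.2)).2 hint)

theorem bounded_forced_from_K_general (T c α : ℝ) (hc : 0 ≤ c)
    (hα1 : 2 ≤ α) (y y' g : ℝ → ℝ)
    (hy : ∀ t ∈ Set.Icc 0 T, HasDerivAt y (y' t) t)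
    (hynn : ∀ t ∈ Set.Icc 0 T, 0 ≤ y t)
    (hgint : IntegrableOn g (Set.Icc 0 T))
    (hg : ∀ t ∈ Set.Icc 0 T, 0 ≤ g t)
    (hineq : ∀ t ∈ Set.Icc 0 T, y' t ≤ (y t + 1) ^ 2 * (g t + c * y t ^ (α / 2)))
    (K : ℝ)
    (hK : K = Real.cos (1 / (y 0 + 1)) + (∫ s in (0:ℝ)..T, g s) +
      c * ∫ s in (0:ℝ)..T, y s ^ (α / 2))
    (hK1 : K < 1) :
    ∀ t ∈ Set.Icc 0 T, y t ≤ 1 / Real.arccos K - 1 := by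
  intro t ht
  have hT : 0 ≤ T := ht.1.trans ht.2
  have hpow : IntegrableOn (fun s => y s ^ (α / 2)) (Icc 0 T) :=
    (ContinuousOn.rpow_const (fun s hs => (hy s hs).continuousAt.continuousWithinAt)
      fun _ _ => Or.inr (by linarith)).integrableOn_Icc
  have hrhs_nonneg : ∀ s ∈ Icc 0 T, 0 ≤ g s + c * y s ^ (α / 2) := fun s hs =>
    add_nonneg (hg s hs) (mul_nonneg hc (Real.rpow_nonneg (hynn s hs) _))
  have hcos : Real.cos (y t + 1)⁻¹ - Real.cos (y 0 + 1)⁻¹ ≤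
      ∫ s in (0:ℝ)..T, (g s + c * y s ^ (α / 2)) :=
    sub_le_integral_of_hasDerivAt_of_le_of_nonneg ht
      (fun s hs => ((hy s hs).add_const 1).cos_inv (by linarith [hynn s hs]))
      (fun s hs => Real.sin_inv_mul_div_sq_le (by linarith [hynn s hs]) (hineq s hs)
        (hrhs_nonneg s hs))
      (hgint.add (hpow.const_mul c)) hrhs_nonneg
  have hsplit : ∫ s in (0:ℝ)..T, (g s + c * y s ^ (α / 2)) =
      (∫ s in (0:ℝ)..T, g s) + c * ∫ s in (0:ℝ)..T, y s ^ (α / 2) := by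
    rw [intervalIntegral.integral_add
      ((intervalIntegrable_iff_integrableOn_Icc_of_le hT).2 hgint)
      ((intervalIntegrable_iff_integrableOn_Icc_of_le hT).2 (hpow.const_mul c)),
      intervalIntegral.integral_const_mul]
  have hy_inv_pos : 0 < (y t + 1)⁻¹ := inv_pos.2 (by linarith [hynn t ht])
  have harccos : Real.arccos K ≤ (y t + 1)⁻¹ :=
    Real.arccos_le_of_cos_le hy_inv_pos.le
      ((inv_le_one_of_one_le₀ (by linarith [hynn t ht])).trans (by linarith [Real.pi_gt_three]))
      (by rw [hK, one_div]; linarith)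
  have hle : y t + 1 ≤ (Real.arccos K)⁻¹ :=
    (le_inv_comm₀ (Real.arccos_pos.2 hK1) (by linarith [hynn t ht])).1 harccos
  rw [one_div]
  linarith

/-- Real-variable core of the paper's Proposition 3: if `y' ≤ (y+1)² (g + c y^{α/2})`
and `K = cos(1/(y(0)+1)) + ∫₀ᵀ g + c ∫₀ᵀ y^{α/2} < 1`, then `y ≤ 1/arccos(K) - 1`
on `[0,T]`. -/
theorem bounded_forced_from_K (T c α : ℝ) (hT : 0 < T) (hc : 0 ≤ c)
    (hα1 : 2 ≤ α) (hα2 : α ≤ 4) (y y' g : ℝ → ℝ)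
    (hy : ∀ t ∈ Set.Icc 0 T, HasDerivAt y (y' t) t)
    (hynn : ∀ t ∈ Set.Icc 0 T, 0 ≤ y t)
    (hgint : IntegrableOn g (Set.Icc 0 T))
    (hg : ∀ t ∈ Set.Icc 0 T, 0 ≤ g t)
    (hineq : ∀ t ∈ Set.Icc 0 T, y' t ≤ (y t + 1) ^ 2 * (g t + c * y t ^ (α / 2)))
    (K : ℝ)
    (hK : K = Real.cos (1 / (y 0 + 1)) + (∫ s in (0:ℝ)..T, g s) +
      c * ∫ s in (0:ℝ)..T, y s ^ (α / 2))
    (hK1 : K < 1) :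
    ∀ t ∈ Set.Icc 0 T, y t ≤ 1 / Real.arccos K - 1 :=
  bounded_forced_from_K_general T c α hc hα1 y y' g hy hynn hgint hg hineq K hK hK1
end
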